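/- Suppose βₙ is a sequence of random vectors in ℝ^q each lying (with probability 1) in the set Cₙ = {β : (β − β̂ₙ)ᵀXₙᵀXₙ(β − β̂ₙ) ≤ q·σ̂ₙ²·Fₙ} where Fₙ/n → 0, σ̂ₙ² → σ² > 0 in probability, (1/n)XₙᵀXₙ → D positive definite, and β̂ₙ → βᵗ in probability. Then βₙ → βᵗ in probability. -/

import Mathlib

/-!
Off an event of vanishing probability, `|σ̂ₙ² - σ²| ≤ 1`, so `bₙ - β̂ₙ` lies in the ellipsoid
`xᵀ Xₙᵀ Xₙ x ≤ q (|σ²| + 1) |Fₙ|`. Since `Xₙᵀ Xₙ / n → D ≥ μ`, eventually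
`xᵀ Xₙᵀ Xₙ x ≥ (μ / 2) n ‖x‖²`, so the ellipsoid has squared radius `O(|Fₙ| / n) → 0`.
Hence, for large `n`, `‖bₙ - βᵗ‖ > ε` forces `‖β̂ₙ - βᵗ‖ > ε / 2` or `|σ̂ₙ² - σ²| > 1`.
-/

open Matrix MeasureTheory Filter Topology

open Finset in
theorem abs_dotProduct_mulVec_le {ι : Type*} [Fintype ι] (A : Matrix ι ι ℝ)
    (x : EuclideanSpace ℝ ι) :
    |x.ofLp ⬝ᵥ A *ᵥ x.ofLp| ≤ (∑ i, ∑ j, |A i j|) * ‖x‖ ^ 2 := by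
  have hx : ∀ i j, |x i * x j| ≤ ‖x‖ ^ 2 := fun i j => by
    rw [abs_mul, sq]
    exact mul_le_mul (PiLp.norm_apply_le x i) (PiLp.norm_apply_le x j) (abs_nonneg _)
      (norm_nonneg _)
  calc |x.ofLp ⬝ᵥ A *ᵥ x.ofLp| = |∑ i, ∑ j, A i j * (x i * x j)| := by
        simp only [dotProduct, mulVec, mul_sum]
        congr 1; refine sum_congr rfl fun i _ => sum_congr rfl fun j _ => ?_; ring
    _ ≤ ∑ i, ∑ j, |A i j| * |x i * x j| :=
        (abs_sum_le_sum_abs _ _).trans <| sum_le_sum fun i _ =>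
          (abs_sum_le_sum_abs _ _).trans_eq <| by simp only [abs_mul]
    _ ≤ ∑ i, ∑ j, |A i j| * ‖x‖ ^ 2 := by gcongr with i _ j _; exact hx i j
    _ = (∑ i, ∑ j, |A i j|) * ‖x‖ ^ 2 := by simp only [sum_mul]

theorem EuclideanSpace.norm_sq_eq_dotProduct {ι : Type*} [Fintype ι] (x : EuclideanSpace ℝ ι) :
    ‖x‖ ^ 2 = x.ofLp ⬝ᵥ x.ofLp := by
  rw [EuclideanSpace.real_norm_sq_eq]; simp only [dotProduct, sq]

theorem eventually_mul_norm_sq_le_dotProduct_mulVec {α ι : Type*} [Fintype ι] {l : Filter α}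
    {A : α → Matrix ι ι ℝ} {D : Matrix ι ι ℝ} {μ c : ℝ} (hc : c < μ)
    (hmin : ∀ v : ι → ℝ, μ * (v ⬝ᵥ v) ≤ v ⬝ᵥ D *ᵥ v)
    (hA : ∀ i j, Tendsto (fun a => A a i j) l (𝓝 (D i j))) :
    ∀ᶠ a in l, ∀ x : EuclideanSpace ℝ ι, c * ‖x‖ ^ 2 ≤ x.ofLp ⬝ᵥ A a *ᵥ x.ofLp := by
  have hdist : Tendsto (fun a => ∑ i, ∑ j, |(A a - D) i j|) l (𝓝 0) := by
    simpa using tendsto_finsetSum _ fun i _ => tendsto_finsetSum _ fun j _ =>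
      ((hA i j).sub_const (D i j)).abs
  filter_upwards [hdist.eventually (eventually_le_nhds (sub_pos.2 hc))] with a ha x
  have hpert := (abs_le.1 (abs_dotProduct_mulVec_le (A a - D) x)).1
  rw [sub_mulVec, dotProduct_sub] at hpert
  have hD := hmin x.ofLp
  rw [← EuclideanSpace.norm_sq_eq_dotProduct] at hD
  nlinarith [sq_nonneg ‖x‖]

theorem eventually_norm_lt_of_dotProduct_mulVec_le {ι : Type*} [Fintype ι]
    {M : ℕ → Matrix ι ι ℝ} {D : Matrix ι ι ℝ} {μ : ℝ} (hμ : 0 < μ)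
    (hmin : ∀ v : ι → ℝ, μ * (v ⬝ᵥ v) ≤ v ⬝ᵥ D *ᵥ v)
    (hM : ∀ i j, Tendsto (fun n : ℕ => (n : ℝ)⁻¹ * M n i j) atTop (𝓝 (D i j)))
    {F : ℕ → ℝ} (hF : Tendsto (fun n : ℕ => F n / n) atTop (𝓝 0)) (K : ℝ) {δ : ℝ}
    (hδ : 0 < δ) :
    ∀ᶠ n in atTop, ∀ (x : EuclideanSpace ℝ ι) (t : ℝ), |t| ≤ K →
      x.ofLp ⬝ᵥ M n *ᵥ x.ofLp ≤ t * F n → ‖x‖ < δ := by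
  have hlow := eventually_mul_norm_sq_le_dotProduct_mulVec (A := fun n : ℕ => (n : ℝ)⁻¹ • M n)
    (half_lt_self hμ) hmin (by simpa only [Matrix.smul_apply, smul_eq_mul] using hM)
  have hrad : ∀ᶠ n : ℕ in atTop, K * |F n / n| < μ / 2 * δ ^ 2 :=
    (by simpa using hF.abs.const_mul K : Tendsto (fun n : ℕ => K * |F n / n|) atTop (𝓝 0))
      |>.eventually (eventually_lt_nhds (by positivity))
  filter_upwards [hlow, hrad] with n hlow hrad x t ht hx
  have hsq : μ / 2 * ‖x‖ ^ 2 < μ / 2 * δ ^ 2 :=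
    calc μ / 2 * ‖x‖ ^ 2 ≤ (n : ℝ)⁻¹ * (x.ofLp ⬝ᵥ M n *ᵥ x.ofLp) := by
          simpa only [smul_mulVec, dotProduct_smul, smul_eq_mul] using hlow x
      _ ≤ (n : ℝ)⁻¹ * (t * F n) := by gcongr
      _ = t * (F n / n) := by ring
      _ ≤ |t| * |F n / n| := (le_abs_self _).trans_eq (abs_mul _ _)
      _ ≤ K * |F n / n| := by gcongr
      _ < μ / 2 * δ ^ 2 := hrad
  exact lt_of_pow_lt_pow_left₀ 2 hδ.le (lt_of_mul_lt_mul_left hsq (by positivity))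

theorem tendsto_measure_toReal_of_ae_subset_union {α : Type*} {l : Filter α} {Ω : α → Type*}
    [∀ a, MeasurableSpace (Ω a)] {P : ∀ a, Measure (Ω a)} [∀ a, IsFiniteMeasure (P a)]
    {A B C : ∀ a, Set (Ω a)} (hB : Tendsto (fun a => (P a (B a)).toReal) l (𝓝 0))
    (hC : Tendsto (fun a => (P a (C a)).toReal) l (𝓝 0))
    (hABC : ∀ᶠ a in l, A a ≤ᵐ[P a] (B a ∪ C a : Set (Ω a))) :
    Tendsto (fun a => (P a (A a)).toReal) l (𝓝 0) := by
  refine squeeze_zero' (Eventually.of_forall fun _ => ENNReal.toReal_nonneg) ?_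
    (by simpa using hB.add hC)
  filter_upwards [hABC] with a ha
  exact (ENNReal.toReal_mono (measure_ne_top _ _) (measure_mono_ae ha)).trans
    (measureReal_union_le _ _)

theorem cmc_solution_consistent_general (q : ℕ)
    (Ω : ℕ → Type*) [∀ n, MeasurableSpace (Ω n)]
    (P : ∀ n, Measure (Ω n)) [∀ n, IsProbabilityMeasure (P n)]
    (X : ∀ n : ℕ, Matrix (Fin n) (Fin q) ℝ)
    (D : Matrix (Fin q) (Fin q) ℝ) (μ : ℝ) (hμ : 0 < μ)
    (hmin : ∀ v : Fin q → ℝ, μ * (v ⬝ᵥ v) ≤ v ⬝ᵥ D.mulVec v)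
    (hDconv : ∀ i j : Fin q,
      Tendsto (fun n : ℕ => (n : ℝ)⁻¹ * ((X n)ᵀ * X n) i j) atTop (nhds (D i j)))
    (bhat : ∀ n, Ω n → EuclideanSpace ℝ (Fin q))
    (βt : EuclideanSpace ℝ (Fin q))
    (hbhatconv : ∀ ε : ℝ, 0 < ε →
      Tendsto (fun n => (P n {ω | ε < ‖bhat n ω - βt‖}).toReal) atTop (nhds 0))
    (s : ∀ n, Ω n → ℝ)
    (σ2 : ℝ)
    (hsconv : ∀ ε : ℝ, 0 < ε →
      Tendsto (fun n => (P n {ω | ε < |s n ω - σ2|}).toReal) atTop (nhds 0))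
    (F : ℕ → ℝ) (hF : Tendsto (fun n : ℕ => F n / n) atTop (nhds 0))
    (b : ∀ n, Ω n → EuclideanSpace ℝ (Fin q))
    (hconstraint : ∀ n, ∀ᵐ ω ∂(P n),
      (fun i => b n ω i - bhat n ω i) ⬝ᵥ
          ((X n)ᵀ * X n).mulVec (fun i => b n ω i - bhat n ω i) ≤
        q * s n ω * F n) :
    ∀ ε : ℝ, 0 < ε →
      Tendsto (fun n => (P n {ω | ε < ‖b n ω - βt‖}).toReal) atTop (nhds 0) := by
  intro ε hε
  have hshrink := eventually_norm_lt_of_dotProduct_mulVec_le hμ hmin hDconv hF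
    (q * (|σ2| + 1)) (half_pos hε)
  refine tendsto_measure_toReal_of_ae_subset_union (hbhatconv _ (half_pos hε))
    (hsconv 1 one_pos) ?_
  filter_upwards [hshrink] with n hn
  filter_upwards [hconstraint n] with ω hω (hfar : ε < ‖b n ω - βt‖)
  show ε / 2 < ‖bhat n ω - βt‖ ∨ 1 < |s n ω - σ2|
  by_contra! ⟨hbhat, hs⟩
  have hqs : |q * s n ω| ≤ q * (|σ2| + 1) := by
    rw [abs_mul, Nat.abs_cast]
    gcongr
    linarith [abs_sub_abs_le_abs_sub (s n ω) σ2]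
  have hclose := hn (b n ω - bhat n ω) _ hqs hω
  linarith [norm_sub_le_norm_sub_add_norm_sub (b n ω) (bhat n ω) βt]

/-- Random vectors lying in shrinking confidence ellipsoids centered at consistent
estimators are themselves consistent. -/
theorem cmc_solution_consistent (q : ℕ) (hq : 1 ≤ q)
    (Ω : ℕ → Type*) [∀ n, MeasurableSpace (Ω n)]
    (P : ∀ n, Measure (Ω n)) [∀ n, IsProbabilityMeasure (P n)]
    (X : ∀ n : ℕ, Matrix (Fin n) (Fin q) ℝ)
    (D : Matrix (Fin q) (Fin q) ℝ) (hD : D.PosDef) (μ : ℝ) (hμ : 0 < μ)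
    (hmin : ∀ v : Fin q → ℝ, μ * (v ⬝ᵥ v) ≤ v ⬝ᵥ D.mulVec v)
    (hDconv : ∀ i j : Fin q,
      Tendsto (fun n : ℕ => (n : ℝ)⁻¹ * ((X n)ᵀ * X n) i j) atTop (nhds (D i j)))
    (bhat : ∀ n, Ω n → EuclideanSpace ℝ (Fin q))
    (hbhatmeas : ∀ n, Measurable (bhat n))
    (βt : EuclideanSpace ℝ (Fin q))
    (hbhatconv : ∀ ε : ℝ, 0 < ε →
      Tendsto (fun n => (P n {ω | ε < ‖bhat n ω - βt‖}).toReal) atTop (nhds 0))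
    (s : ∀ n, Ω n → ℝ) (hsmeas : ∀ n, Measurable (s n))
    (hspos : ∀ n ω, 0 < s n ω)
    (σ2 : ℝ) (hσ2 : 0 < σ2)
    (hsconv : ∀ ε : ℝ, 0 < ε →
      Tendsto (fun n => (P n {ω | ε < |s n ω - σ2|}).toReal) atTop (nhds 0))
    (F : ℕ → ℝ) (hF : Tendsto (fun n : ℕ => F n / n) atTop (nhds 0))
    (b : ∀ n, Ω n → EuclideanSpace ℝ (Fin q))
    (hbmeas : ∀ n, Measurable (b n))
    (hconstraint : ∀ n, ∀ᵐ ω ∂(P n),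
      (fun i => b n ω i - bhat n ω i) ⬝ᵥ
          ((X n)ᵀ * X n).mulVec (fun i => b n ω i - bhat n ω i) ≤
        q * s n ω * F n) :
    ∀ ε : ℝ, 0 < ε →
      Tendsto (fun n => (P n {ω | ε < ‖b n ω - βt‖}).toReal) atTop (nhds 0) :=
  cmc_solution_consistent_general q Ω P X D μ hμ hmin hDconv bhat βt hbhatconv s σ2 hsconv F hF b
    hconstraint
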